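/- Let G be a second countable locally compact group, π a unitary representation of G on a separable complex Hilbert space H, and c ∈ Z¹(G,π). Let p ∈ π(G)' be the projection such that the closure of the reduction ideal I(c) in the weak operator topology equals π(G)'p. Then the projected cocycle p·c (for the subrepresentation of π on pH) is evanescent and the projected cocycle (1−p)·c (for the subrepresentation of π on (1−p)H) is irreducible. Moreover, for every projection q ∈ π(G)' such that q·c is evanescent, one has q ≤ p. -/

import Mathlib

noncomputable section

open MeasureTheory Filter Topology Pointwise

namespace Evan

variable {𝕜 : Type} [RCLike 𝕜]
variable {G : Type} [Group G] [TopologicalSpace G] [IsTopologicalGroup G]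
variable {H : Type} [NormedAddCommGroup H] [InnerProductSpace 𝕜 H] [CompleteSpace H]

/-- A continuous unitary (orthogonal, when `𝕜 = ℝ`) representation of `G` on `H`:
a homomorphism into the unitary group which is continuous for the topology
of pointwise norm convergence. -/
structure IsUnitaryRep (π : G →* (H →L[𝕜] H)) : Prop where
  mem_unitary : ∀ g, π g ∈ unitary (H →L[𝕜] H)
  cont : ∀ ξ : H, Continuous fun g => π g ξ

/-- The commutant `π(G)'` of a representation. -/
def commutant (π : G →* (H →L[𝕜] H)) : Set (H →L[𝕜] H) :=
  {T | ∀ g, T * π g = π g * T}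

/-- The bicommutant `π(G)''`, i.e. the von Neumann algebra generated by `π(G)`. -/
def bicommutant (π : G →* (H →L[𝕜] H)) : Set (H →L[𝕜] H) :=
  Set.centralizer (commutant π)

/-- Closure of a set of operators in the weak operator topology. -/
def wotClosure (𝕜 : Type) {H : Type} [RCLike 𝕜] [NormedAddCommGroup H]
    [InnerProductSpace 𝕜 H] (S : Set (H →L[𝕜] H)) : Set (H →L[𝕜] H) :=
  (ContinuousLinearMapWOT.ofCLM : (H →L[𝕜] H) → ContinuousLinearMapWOT (RingHom.id 𝕜) H H) ⁻¹' closure ((ContinuousLinearMapWOT.ofCLM : (H →L[𝕜] H) → ContinuousLinearMapWOT (RingHom.id 𝕜) H H) '' S)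

/-- A continuous `1`-cocycle for the representation `π`. -/
def IsCocycle (π : G →* (H →L[𝕜] H)) (c : G → H) : Prop :=
  Continuous c ∧ ∀ g h : G, c (g * h) = c g + π g (c h)

/-- A coboundary: `c g = ξ - π g ξ` for some `ξ`. -/
def IsCoboundary (π : G →* (H →L[𝕜] H)) (c : G → H) : Prop :=
  ∃ ξ : H, ∀ g : G, c g = ξ - π g ξ

/-- `c` is an almost coboundary: it lies in the closure of the set of coboundaries for
the topology of uniform convergence on compact subsets of `G`. -/
def IsAlmostCoboundary (π : G →* (H →L[𝕜] H)) (c : G → H) : Prop :=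
  ∀ Q : Set G, IsCompact Q → ∀ ε : ℝ, 0 < ε → ∃ ξ : H, ∀ g ∈ Q, ‖c g - (ξ - π g ξ)‖ ≤ ε

/-- The reduction ideal `I(c) = {T ∈ π(G)' : T·c ∈ B¹(G,π)}`. -/
def reductionIdeal (π : G →* (H →L[𝕜] H)) (c : G → H) : Set (H →L[𝕜] H) :=
  {T | T ∈ commutant π ∧ IsCoboundary π fun g => T (c g)}

/-- `c` is evanescent: `I(c)` is dense in `π(G)'` for the weak operator topology. -/
def IsEvanescent (π : G →* (H →L[𝕜] H)) (c : G → H) : Prop :=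
  commutant π ⊆ wotClosure 𝕜 (reductionIdeal π c)

/-- `c` is irreducible: `I(c) = {0}`. -/
def IsIrreducibleCocycle (π : G →* (H →L[𝕜] H)) (c : G → H) : Prop :=
  reductionIdeal π c = {0}

/-- `π` has almost invariant vectors. -/
def HasAlmostInvariantVectors (π : G →* (H →L[𝕜] H)) : Prop :=
  ∀ Q : Set G, IsCompact Q → ∀ ε : ℝ, 0 < ε →
    ∃ ξ : H, ‖ξ‖ = 1 ∧ ∀ g ∈ Q, ‖π g ξ - ξ‖ ≤ ε

/-- `π` is irreducible: the only closed invariant subspaces are `⊥` and `⊤`. -/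
def IsIrreducibleRep (π : G →* (H →L[𝕜] H)) : Prop :=
  ∀ K : Submodule 𝕜 H, IsClosed (K : Set H) → (∀ g : G, ∀ x ∈ K, π g x ∈ K) →
    K = ⊥ ∨ K = ⊤

/-- A projection: a self-adjoint idempotent. -/
def IsProjection (p : H →L[𝕜] H) : Prop :=
  IsSelfAdjoint p ∧ p * p = p

/-- The reduction ideal of the projected cocycle `p·c`, viewed as a cocycle for the
subrepresentation of `π` on `pH`, whose commutant is identified with the corner
`p π(G)' p` (a von Neumann algebra with unit `p`). -/
def projReductionIdeal (π : G →* (H →L[𝕜] H)) (c : G → H) (p : H →L[𝕜] H) :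
    Set (H →L[𝕜] H) :=
  {T | T ∈ commutant π ∧ p * T = T ∧ T * p = T ∧
    ∃ ξ : H, p ξ = ξ ∧ ∀ g : G, T (c g) = ξ - π g ξ}

/-- The projected cocycle `p·c` is evanescent: its reduction ideal is dense, in the weak
operator topology, in the commutant of the subrepresentation on `pH` (the corner
`p π(G)' p`). -/
def ProjIsEvanescent (π : G →* (H →L[𝕜] H)) (c : G → H) (p : H →L[𝕜] H) : Prop :=
  {T | T ∈ commutant π ∧ p * T = T ∧ T * p = T} ⊆
    wotClosure 𝕜 (projReductionIdeal π c p)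

/-- The projected cocycle `p·c` is irreducible: its reduction ideal is `{0}`. -/
def ProjIsIrreducible (π : G →* (H →L[𝕜] H)) (c : G → H) (p : H →L[𝕜] H) : Prop :=
  projReductionIdeal π c p = {0}

/-- `G` is weak identity excluding (WIE): every irreducible unitary representation of `G`
on a separable complex Hilbert space that has almost invariant vectors is trivial. -/
def IsWIE (G : Type) [Group G] [TopologicalSpace G] [IsTopologicalGroup G] : Prop :=
  ∀ (H : Type) (_ : NormedAddCommGroup H) (_ : InnerProductSpace ℂ H)
    (_ : CompleteSpace H) (_ : TopologicalSpace.SeparableSpace H)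
    (π : G →* (H →L[ℂ] H)), IsUnitaryRep π → IsIrreducibleRep π →
      HasAlmostInvariantVectors π → ∀ g : G, π g = 1

end Evan

namespace Evan

/-!
Every element `A * p` of `π(G)' p` is fixed by right multiplication by `p`, hence so is every
element of `I(c)`. Left multiplication by `p` is continuous for the weak operator topology and
maps `I(c)` into the reduction ideal of `p·c`; applied to an element of the corner `p π(G)' p`,
which lies in the closure of `I(c)`, this gives evanescence. An element `T` of the reduction
ideal of `(1-p)·c` satisfies both `T * p = T` and `T * p = 0`. Finally, if `q·c` is evanescent
then `q` lies in the closure of `I(c)`, so `q * p = q`, i.e. `q ≤ p`.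
-/

variable {𝕜 : Type} [RCLike 𝕜] {H : Type} [NormedAddCommGroup H] [InnerProductSpace 𝕜 H]

lemma subset_wotClosure (S : Set (H →L[𝕜] H)) : S ⊆ wotClosure 𝕜 S :=
  fun _ hT => subset_closure (Set.mem_image_of_mem _ hT)

lemma wotClosure_mono {S S' : Set (H →L[𝕜] H)} (h : S ⊆ S') :
    wotClosure 𝕜 S ⊆ wotClosure 𝕜 S' :=
  Set.preimage_mono (closure_mono (Set.image_mono h))

lemma mul_left_mem_wotClosure {S S' : Set (H →L[𝕜] H)} {T : H →L[𝕜] H} (A : H →L[𝕜] H)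
    (hSS' : ∀ B ∈ S, A * B ∈ S') (hT : T ∈ wotClosure 𝕜 S) : A * T ∈ wotClosure 𝕜 S' := by
  let mulLeft : (H →WOT[𝕜] H) → H →WOT[𝕜] H := fun B => .ofCLM (A * B.toCLM)
  have hcont : Continuous mulLeft :=
    ContinuousLinearMapWOT.continuous_of_dual_apply_continuous fun x y =>
      ContinuousLinearMapWOT.continuous_dual_apply x (y.comp A)
  have hmaps : Set.MapsTo mulLeft (.ofCLM '' S) (.ofCLM '' S') := by
    rintro _ ⟨B, hB, rfl⟩
    exact ⟨A * B, hSS' B hB, rfl⟩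
  exact (map_mem_closure hcont hT hmaps :)

lemma IsProjection.le_of_mul_eq_left [CompleteSpace H] {p q : H →L[𝕜] H} (hp : IsProjection p)
    (hq : IsProjection q) (hqp : q * p = q) : q ≤ p :=
  ContinuousLinearMap.IsPositive.of_isStarProjection <|
    IsStarProjection.sub_of_mul_eq_left ⟨hq.2, hq.1⟩ ⟨hp.2, hp.1⟩ hqp

section Commutant

variable {G : Type} [Group G] {π : G →* (H →L[𝕜] H)} {c : G → H}

lemma mul_mem_commutant {A B : H →L[𝕜] H} (hA : A ∈ commutant π) (hB : B ∈ commutant π) :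
    A * B ∈ commutant π := fun g => by
  rw [mul_assoc, hB g, ← mul_assoc, hA g, mul_assoc]

lemma commute_apply_of_mem_commutant {A : H →L[𝕜] H} (hA : A ∈ commutant π) (g : G) (ξ : H) :
    A (π g ξ) = π g (A ξ) :=
  DFunLike.congr_fun (hA g) ξ

lemma zero_mem_projReductionIdeal (p : H →L[𝕜] H) : 0 ∈ projReductionIdeal π c p :=
  ⟨fun _ => by simp, by simp, by simp, 0, by simp, fun _ => by simp⟩

lemma projReductionIdeal_subset_reductionIdeal (p : H →L[𝕜] H) :
    projReductionIdeal π c p ⊆ reductionIdeal π c :=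
  fun _ ⟨hT, _, _, ξ, _, hξ⟩ => ⟨hT, ξ, hξ⟩

lemma mul_mem_projReductionIdeal {p S : H →L[𝕜] H} (hpc : p ∈ commutant π) (hpp : p * p = p)
    (hS : S ∈ reductionIdeal π c) (hSp : S * p = S) : p * S ∈ projReductionIdeal π c p := by
  obtain ⟨hSc, ξ, hξ⟩ := hS
  refine ⟨mul_mem_commutant hpc hSc, by rw [← mul_assoc, hpp], by rw [mul_assoc, hSp],
    p ξ, DFunLike.congr_fun hpp ξ, fun g => ?_⟩
  change p (S (c g)) = p ξ - π g (p ξ)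
  rw [show S (c g) = ξ - π g ξ from hξ g, map_sub, commute_apply_of_mem_commutant hpc]

end Commutant

section ReductionIdealClosure

variable {G : Type} [Group G] {π : G →* (H →L[𝕜] H)} {c : G → H} {p : H →L[𝕜] H}

lemma mul_proj_eq_of_mem_wotClosure (hpp : p * p = p)
    (hclos : wotClosure 𝕜 (reductionIdeal π c) = (fun x => x * p) '' commutant π)
    {T : H →L[𝕜] H} (hT : T ∈ wotClosure 𝕜 (reductionIdeal π c)) : T * p = T := by
  rw [hclos] at hT
  obtain ⟨A, -, rfl⟩ := hT
  rw [mul_assoc, hpp]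

lemma projIsEvanescent_of_wotClosure_eq (hpc : p ∈ commutant π) (hpp : p * p = p)
    (hclos : wotClosure 𝕜 (reductionIdeal π c) = (fun x => x * p) '' commutant π) :
    ProjIsEvanescent π c p := by
  rintro T ⟨hTc, hpT, hTp⟩
  have hT : T ∈ wotClosure 𝕜 (reductionIdeal π c) := hclos ▸ ⟨T, hTc, hTp⟩
  rw [← hpT]
  exact mul_left_mem_wotClosure p (fun S hS => mul_mem_projReductionIdeal hpc hpp hS
    (mul_proj_eq_of_mem_wotClosure hpp hclos (subset_wotClosure _ hS))) hT

lemma projIsIrreducible_one_sub_of_wotClosure_eq (hpp : p * p = p)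
    (hclos : wotClosure 𝕜 (reductionIdeal π c) = (fun x => x * p) '' commutant π) :
    ProjIsIrreducible π c (1 - p) := by
  refine Set.eq_singleton_iff_unique_mem.mpr ⟨zero_mem_projReductionIdeal _, fun T hT => ?_⟩
  have hTp : T * p = T := mul_proj_eq_of_mem_wotClosure hpp hclos
    (subset_wotClosure _ (projReductionIdeal_subset_reductionIdeal _ hT))
  have hTp' : T * p = 0 := by
    have h := hT.2.2.1
    rwa [mul_sub, mul_one, sub_eq_self] at h
  rw [← hTp, hTp']

lemma le_of_projIsEvanescent [CompleteSpace H] (hp : IsProjection p)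
    (hclos : wotClosure 𝕜 (reductionIdeal π c) = (fun x => x * p) '' commutant π)
    {q : H →L[𝕜] H} (hqc : q ∈ commutant π) (hq : IsProjection q)
    (hqe : ProjIsEvanescent π c q) : q ≤ p := by
  have hq_mem : q ∈ wotClosure 𝕜 (reductionIdeal π c) :=
    wotClosure_mono (projReductionIdeal_subset_reductionIdeal q) (hqe ⟨hqc, hq.2, hq.2⟩)
  exact hp.le_of_mul_eq_left hq (mul_proj_eq_of_mem_wotClosure hp.2 hclos hq_mem)

end ReductionIdealClosure

theorem natural_decomposition_general
    (G : Type) [Group G]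
    (H : Type) [NormedAddCommGroup H] [InnerProductSpace ℂ H] [CompleteSpace H]
    (π : G →* (H →L[ℂ] H))
    (c : G → H)
    (p : H →L[ℂ] H) (hpc : p ∈ commutant π) (hp : IsProjection p)
    (hclos : wotClosure ℂ (reductionIdeal π c) = (fun x => x * p) '' commutant π) :
    ProjIsEvanescent π c p ∧ ProjIsIrreducible π c (1 - p) ∧
      ∀ q : H →L[ℂ] H, q ∈ commutant π → IsProjection q → ProjIsEvanescent π c q →
        q ≤ p :=
  ⟨projIsEvanescent_of_wotClosure_eq hpc hp.2 hclos,
    projIsIrreducible_one_sub_of_wotClosure_eq hp.2 hclos,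
    fun _ hqc hq hqe => le_of_projIsEvanescent hp hclos hqc hq hqe⟩

/-- The natural decomposition: if `p` is the projection with
`wot-closure I(c) = π(G)' p`, then `p·c` is evanescent, `(1-p)·c` is irreducible, and `p`
dominates every projection `q ∈ π(G)'` with `q·c` evanescent. -/
theorem natural_decomposition
    (G : Type) [Group G] [TopologicalSpace G] [IsTopologicalGroup G]
    [LocallyCompactSpace G] [SecondCountableTopology G]
    (H : Type) [NormedAddCommGroup H] [InnerProductSpace ℂ H] [CompleteSpace H]
    [TopologicalSpace.SeparableSpace H]
    (π : G →* (H →L[ℂ] H)) (hπ : IsUnitaryRep π)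
    (c : G → H) (hc : IsCocycle π c)
    (p : H →L[ℂ] H) (hpc : p ∈ commutant π) (hp : IsProjection p)
    (hclos : wotClosure ℂ (reductionIdeal π c) = (fun x => x * p) '' commutant π) :
    ProjIsEvanescent π c p ∧ ProjIsIrreducible π c (1 - p) ∧
      ∀ q : H →L[ℂ] H, q ∈ commutant π → IsProjection q → ProjIsEvanescent π c q →
        q ≤ p :=
  natural_decomposition_general G H π c p hpc hp hclos

end Evan
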